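/- Let p ∈ [1/2, 1), let K be a p-core CRG all of whose vertices are white and all of whose edges are black or gray, and let x be a nonnegative weight vector summing to 1 attaining the minimum g_K(p). Let v_0 be a vertex of maximum weight under x, suppose v_0 has at least one gray neighbor, and let v_1 be a gray neighbor of v_0 of maximum weight among the gray neighbors of v_0. Then at least one of the following holds: (i) v_0 and v_1 have at least two common gray neighbors; (ii) g_K(p) > (1−p)/2; (iii) g_K(p) ≥ p/3. -/

import Mathlib

/-- Colors for edges of a colored regularity graph. -/
inductive EColor : Type
  | white
  | gray
  | black
deriving DecidableEq

/-- A colored regularity graph (CRG) on a finite vertex type `V`: each vertex is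
white or black (`vWhite v = true` means white), and each pair of distinct vertices
gets a symmetric edge color (white, gray or black). -/
structure CRG (V : Type) [Fintype V] where
  vWhite : V → Bool
  ecolor : V → V → EColor
  ecolor_symm : ∀ u v, ecolor u v = ecolor v u

namespace CRG

variable {V : Type} [Fintype V] [DecidableEq V]

/-- The matrix `M_K(p)`. -/
noncomputable def M (K : CRG V) (p : ℝ) (u v : V) : ℝ :=
  if u = v then (if K.vWhite u then p else 1 - p)
  else
    match K.ecolor u v with
    | EColor.white => p
    | EColor.black => 1 - p
    | EColor.gray => 0

/-- The function `g_K(p)`: the minimum of `xᵀ M_K(p) x` over nonnegative weight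
vectors summing to `1`. -/
noncomputable def g (K : CRG V) (p : ℝ) : ℝ :=
  sInf {r : ℝ | ∃ x : V → ℝ, (∀ v, 0 ≤ x v) ∧ (∑ v, x v) = 1 ∧
    r = ∑ u, ∑ v, x u * K.M p u v * x v}

/-- The sub-CRG induced on a subset `s` of the vertices. -/
def sub (K : CRG V) (s : Finset V) : CRG {v // v ∈ s} where
  vWhite := fun v => K.vWhite v.1
  ecolor := fun u v => K.ecolor u.1 v.1
  ecolor_symm := fun u v => K.ecolor_symm u.1 v.1

/-- `K` is `p`-core if `g_K(p) < g_{K'}(p)` for every proper (nonempty) sub-CRG `K'`. -/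
def IsPCore (K : CRG V) (p : ℝ) : Prop :=
  ∀ s : Finset V, s.Nonempty → s ≠ Finset.univ → K.g p < (K.sub s).g p

/-- `x` is an optimal weight vector for `K` at `p`. -/
def IsOptWeight (K : CRG V) (p : ℝ) (x : V → ℝ) : Prop :=
  (∀ v, 0 ≤ x v) ∧ (∑ v, x v) = 1 ∧
    (∑ u, ∑ v, x u * K.M p u v * x v) = K.g p

/-- The gray degree `d_G(v)`: total weight of gray neighbors of `v`. -/
noncomputable def dG (K : CRG V) (x : V → ℝ) (v : V) : ℝ :=
  ∑ w ∈ Finset.univ.filter fun w => w ≠ v ∧ K.ecolor v w = EColor.gray, x w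

/-- The white degree `d_W(v)`: total weight of white neighbors of `v`, including `v`
itself if `v` is white. -/
noncomputable def dW (K : CRG V) (x : V → ℝ) (v : V) : ℝ :=
  (∑ w ∈ Finset.univ.filter fun w => w ≠ v ∧ K.ecolor v w = EColor.white, x w) +
    (if K.vWhite v then x v else 0)

/-- The black degree `d_B(v)`: total weight of black neighbors of `v`, including `v`
itself if `v` is black. -/
noncomputable def dB (K : CRG V) (x : V → ℝ) (v : V) : ℝ :=
  (∑ w ∈ Finset.univ.filter fun w => w ≠ v ∧ K.ecolor v w = EColor.black, x w) +
    (if K.vWhite v then 0 else x v)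

/-- The number of gray neighbors of `v`. -/
def grayDeg (K : CRG V) (v : V) : ℕ :=
  (Finset.univ.filter fun w => w ≠ v ∧ K.ecolor v w = EColor.gray).card

end CRG

/-- A graph `H` embeds in a CRG `K`, written `H ↦ K`. -/
def EmbedsIn {α : Type*} {V : Type} [Fintype V] (H : SimpleGraph α) (K : CRG V) : Prop :=
  ∃ φ : α → V,
    (∀ a b : α, H.Adj a b →
      (φ a = φ b ∧ K.vWhite (φ a) = false) ∨
      (φ a ≠ φ b ∧ (K.ecolor (φ a) (φ b) = EColor.black ∨ K.ecolor (φ a) (φ b) = EColor.gray))) ∧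
    (∀ a b : α, a ≠ b → ¬H.Adj a b →
      (φ a = φ b ∧ K.vWhite (φ a) = true) ∨
      (φ a ≠ φ b ∧ (K.ecolor (φ a) (φ b) = EColor.white ∨ K.ecolor (φ a) (φ b) = EColor.gray)))

/-!
At an optimal weighting `x` every vertex of a `p`-core CRG has positive weight, so the first-order
conditions for minimizing `xᵀ M x` over the simplex give `(M x)_v = g_K(p)` for every `v`. When all
vertices are white and no edge is white this reads `g = p x_v + (1 - p) (1 - x_v - d_G(v))`.
Adding these equations for `v₀` and `v₁`, and bounding `d_G(v₀) + d_G(v₁)` by inclusion–exclusion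
(at most one common gray neighbour, of weight at most `x_{v₁}`), gives
`2 g ≥ (2p - 1) x_{v₀} + (3p - 2) x_{v₁} + 1 - p`. Together with `g ≥ p x_{v₀}` this forces
`g > (1 - p)/2` when `p > 3/5` and `g ≥ p/3` when `p ≤ 3/5`.
-/

open Matrix Filter Topology

section QuadraticMinimization

variable {V : Type*} [Fintype V] {A : Matrix V V ℝ}

theorem Matrix.IsSymm.dotProduct_mulVec_comm (hA : A.IsSymm) (x y : V → ℝ) :
    x ⬝ᵥ A *ᵥ y = y ⬝ᵥ A *ᵥ x := by
  rw [dotProduct_mulVec, ← mulVec_transpose, hA.eq, dotProduct_comm]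

theorem Matrix.IsSymm.dotProduct_mulVec_add_smul (hA : A.IsSymm) (x h : V → ℝ) (t : ℝ) :
    (x + t • h) ⬝ᵥ A *ᵥ (x + t • h) =
      x ⬝ᵥ A *ᵥ x + 2 * t * (h ⬝ᵥ A *ᵥ x) + t ^ 2 * (h ⬝ᵥ A *ᵥ h) := by
  simp only [mulVec_add, mulVec_smul, add_dotProduct, dotProduct_add, smul_dotProduct,
    dotProduct_smul, smul_eq_mul, hA.dotProduct_mulVec_comm x h]
  ring

theorem Matrix.IsSymm.dotProduct_mulVec_le_of_isMinOn (hA : A.IsSymm) {S : Set (V → ℝ)}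
    (hS : Convex ℝ S) {x y : V → ℝ} (hx : x ∈ S) (hy : y ∈ S)
    (hmin : IsMinOn (fun z => z ⬝ᵥ A *ᵥ z) S x) :
    x ⬝ᵥ A *ᵥ x ≤ y ⬝ᵥ A *ᵥ x := by
  have hslope : ∀ᶠ t in 𝓝[>] (0 : ℝ),
      0 ≤ 2 * ((y - x) ⬝ᵥ A *ᵥ x) + t * ((y - x) ⬝ᵥ A *ᵥ (y - x)) := by
    filter_upwards [Ioc_mem_nhdsGT zero_lt_one] with t ⟨ht₀, ht₁⟩
    have hle : x ⬝ᵥ A *ᵥ x ≤ (x + t • (y - x)) ⬝ᵥ A *ᵥ (x + t • (y - x)) :=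
      hmin (hS.add_smul_sub_mem hx hy ⟨ht₀.le, ht₁⟩)
    rw [hA.dotProduct_mulVec_add_smul] at hle
    nlinarith
  have hlim : Tendsto (fun t : ℝ => 2 * ((y - x) ⬝ᵥ A *ᵥ x) + t * ((y - x) ⬝ᵥ A *ᵥ (y - x)))
      (𝓝[>] 0) (𝓝 (2 * ((y - x) ⬝ᵥ A *ᵥ x))) := by
    refine tendsto_nhdsWithin_of_tendsto_nhds ?_
    simpa using ((continuous_id.mul continuous_const).const_add _).tendsto (0 : ℝ)
  have := ge_of_tendsto hlim hslope
  rw [sub_dotProduct] at this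
  linarith

theorem Matrix.IsSymm.le_mulVec_apply_of_isMinOn_stdSimplex [DecidableEq V] (hA : A.IsSymm)
    {x : V → ℝ} (hx : x ∈ stdSimplex ℝ V)
    (hmin : IsMinOn (fun z => z ⬝ᵥ A *ᵥ z) (stdSimplex ℝ V) x) (v : V) :
    x ⬝ᵥ A *ᵥ x ≤ (A *ᵥ x) v := by
  simpa [single_dotProduct] using
    hA.dotProduct_mulVec_le_of_isMinOn (convex_stdSimplex ℝ V) hx (single_mem_stdSimplex ℝ v) hmin

theorem Matrix.IsSymm.mulVec_apply_eq_of_isMinOn_stdSimplex (hA : A.IsSymm) {x : V → ℝ}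
    (hx : x ∈ stdSimplex ℝ V) (hmin : IsMinOn (fun z => z ⬝ᵥ A *ᵥ z) (stdSimplex ℝ V) x)
    {v : V} (hv : x v ≠ 0) :
    (A *ᵥ x) v = x ⬝ᵥ A *ᵥ x := by
  classical
  have hle := hA.le_mulVec_apply_of_isMinOn_stdSimplex hx hmin
  have hsum : ∑ w, x w * ((A *ᵥ x) w - x ⬝ᵥ A *ᵥ x) = 0 := by
    simp only [mul_sub, Finset.sum_sub_distrib, ← Finset.sum_mul, hx.2, one_mul]
    exact sub_self _
  have hterm := (Finset.sum_eq_zero_iff_of_nonneg fun w _ =>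
    mul_nonneg (hx.1 w) (sub_nonneg.2 (hle w))).1 hsum v (Finset.mem_univ v)
  linarith [(mul_eq_zero.1 hterm).resolve_left hv]

end QuadraticMinimization

theorem Finset.sum_le_of_card_le_one {ι : Type*} {s : Finset ι} {f : ι → ℝ} {b : ℝ}
    (hs : s.card ≤ 1) (hf : ∀ i ∈ s, f i ≤ b) (hb : 0 ≤ b) : ∑ i ∈ s, f i ≤ b := by
  calc ∑ i ∈ s, f i ≤ s.card * b := by simpa using s.sum_le_card_nsmul f b hf
    _ ≤ 1 * b := by gcongr; exact_mod_cast hs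
    _ = b := one_mul b

namespace CRG

variable {V : Type} [Fintype V] [DecidableEq V] (K : CRG V)

noncomputable def toMatrix (p : ℝ) : Matrix V V ℝ := Matrix.of (K.M p)

theorem isSymm_toMatrix (p : ℝ) : (K.toMatrix p).IsSymm := by
  ext u v
  simp only [toMatrix, transpose_apply, of_apply, M, eq_comm (a := v), K.ecolor_symm v u]
  rcases eq_or_ne u v with rfl | h
  · rfl
  · simp only [if_neg h]

theorem sum_sum_M_eq_dotProduct_mulVec (p : ℝ) (x : V → ℝ) :
    ∑ u, ∑ v, x u * K.M p u v * x v = x ⬝ᵥ K.toMatrix p *ᵥ x := by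
  rw [dot_mulVec_eq_sum_sum, Finset.sum_comm]
  rfl

theorem g_le {p : ℝ} {y : V → ℝ} (hy : y ∈ stdSimplex ℝ V) : K.g p ≤ y ⬝ᵥ K.toMatrix p *ᵥ y := by
  have hbdd : BddBelow ((fun z => z ⬝ᵥ K.toMatrix p *ᵥ z) '' stdSimplex ℝ V) :=
    (isCompact_stdSimplex ℝ V).bddBelow_image (by fun_prop)
  refine csInf_le (hbdd.mono ?_) ⟨y, hy.1, hy.2, (K.sum_sum_M_eq_dotProduct_mulVec p y).symm⟩
  rintro r ⟨z, hz₀, hz₁, rfl⟩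
  exact ⟨z, ⟨hz₀, hz₁⟩, (K.sum_sum_M_eq_dotProduct_mulVec p z).symm⟩

theorem sub_M (p : ℝ) (s : Finset V) (u v : s) : (K.sub s).M p u v = K.M p u v := by
  unfold M sub
  rcases eq_or_ne u v with rfl | h
  · simp
  · simp only [if_neg h, if_neg (Subtype.coe_ne_coe.2 h)]

theorem g_sub_le {p : ℝ} {s : Finset V} {y : V → ℝ} (hy : y ∈ stdSimplex ℝ V)
    (hys : ∀ v ∉ s, y v = 0) : (K.sub s).g p ≤ y ⬝ᵥ K.toMatrix p *ᵥ y := by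
  have hsum : ∀ f : V → ℝ, (∀ v ∉ s, f v = 0) → ∑ v : s, f v = ∑ v, f v := fun f hf => by
    rw [Finset.sum_coe_sort]
    exact Finset.sum_subset (Finset.subset_univ s) fun v _ hv => hf v hv
  have hrestr : (fun v : s => y v) ∈ stdSimplex ℝ s := ⟨fun v => hy.1 v, (hsum y hys).trans hy.2⟩
  calc (K.sub s).g p ≤ _ := (K.sub s).g_le hrestr
    _ = y ⬝ᵥ K.toMatrix p *ᵥ y := by
      rw [← sum_sum_M_eq_dotProduct_mulVec, ← sum_sum_M_eq_dotProduct_mulVec]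
      simp only [sub_M]
      rw [← hsum (fun u => ∑ v, y u * K.M p u v * y v) fun u hu => by simp [hys u hu]]
      exact Finset.sum_congr rfl fun u _ =>
        hsum (fun v => y u * K.M p u v * y v) fun v hv => by simp [hys v hv]

variable {K} {p : ℝ} {x : V → ℝ}

theorem IsOptWeight.mem_stdSimplex (hx : K.IsOptWeight p x) : x ∈ stdSimplex ℝ V :=
  ⟨hx.1, hx.2.1⟩

theorem IsOptWeight.dotProduct_mulVec_eq_g (hx : K.IsOptWeight p x) :
    x ⬝ᵥ K.toMatrix p *ᵥ x = K.g p := by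
  rw [← sum_sum_M_eq_dotProduct_mulVec, hx.2.2]

theorem IsOptWeight.isMinOn (hx : K.IsOptWeight p x) :
    IsMinOn (fun z => z ⬝ᵥ K.toMatrix p *ᵥ z) (stdSimplex ℝ V) x := fun _ hy =>
  hx.dotProduct_mulVec_eq_g.trans_le (K.g_le hy)

theorem IsOptWeight.mulVec_apply_eq_g (hx : K.IsOptWeight p x) {v : V} (hv : x v ≠ 0) :
    (K.toMatrix p *ᵥ x) v = K.g p := by
  rw [(K.isSymm_toMatrix p).mulVec_apply_eq_of_isMinOn_stdSimplex hx.mem_stdSimplex hx.isMinOn hv,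
    hx.dotProduct_mulVec_eq_g]

theorem IsOptWeight.pos_of_isPCore (hx : K.IsOptWeight p x) (hcore : K.IsPCore p) (v : V) :
    0 < x v := by
  refine (hx.1 v).lt_of_ne' fun hv => ?_
  set s := Finset.univ.filter fun w => x w ≠ 0
  have hs : s.Nonempty := by
    refine Finset.filter_nonempty_iff.2 ?_
    obtain ⟨w, hw, hxw⟩ := Finset.exists_ne_zero_of_sum_ne_zero (hx.2.1.trans_ne one_ne_zero)
    exact ⟨w, hw, hxw⟩
  have hsu : s ≠ Finset.univ := fun h => by
    have hvs : v ∈ s := by rw [h]; exact Finset.mem_univ v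
    simp [s, hv] at hvs
  have hlt := hcore s hs hsu
  have hle := K.g_sub_le (p := p) (s := s) hx.mem_stdSimplex fun w hw =>
    not_not.1 fun h => hw (by simp [s, h])
  rw [hx.dotProduct_mulVec_eq_g] at hle
  exact hlt.not_ge hle

variable (K)

theorem mulVec_toMatrix_apply_of_white (hwhite : ∀ v, K.vWhite v = true)
    (hedges : ∀ u v, u ≠ v → K.ecolor u v ≠ EColor.white) (hx : ∑ v, x v = 1) (v : V) :
    (K.toMatrix p *ᵥ x) v = p * x v + (1 - p) * (1 - x v - K.dG x v) := by
  have hentry : ∀ w, K.M p v w * x w = (1 - p) * x w + (2 * p - 1) * (if v = w then x w else 0)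
      - (1 - p) * (if w ≠ v ∧ K.ecolor v w = EColor.gray then x w else 0) := fun w => by
    -- every entry of row `v` is `1 - p`, except `p` on the diagonal and `0` on gray edges
    rcases eq_or_ne v w with rfl | h
    · simp [M, hwhite]
      ring
    · have := hedges v w h
      cases hc : K.ecolor v w <;> simp_all [M, Ne.symm h]
  simp only [mulVec, dotProduct, toMatrix, of_apply, hentry, Finset.sum_sub_distrib,
    Finset.sum_add_distrib, ← Finset.mul_sum, Finset.sum_ite_eq, Finset.mem_univ, if_true,
    ← Finset.sum_filter, hx, dG]
  ring

theorem dG_le_one_sub (hx : x ∈ stdSimplex ℝ V) (v : V) : K.dG x v ≤ 1 - x v := by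
  rw [← hx.2, ← Finset.sum_erase_eq_sub (Finset.mem_univ v)]
  refine Finset.sum_le_sum_of_subset_of_nonneg (fun w hw => ?_) fun w _ _ => hx.1 w
  exact Finset.mem_erase.2 ⟨(Finset.mem_filter.1 hw).2.1, Finset.mem_univ w⟩

theorem dG_add_dG_le (hx : x ∈ stdSimplex ℝ V) (u v : V) :
    K.dG x u + K.dG x v ≤ 1 + ∑ w ∈ Finset.univ.filter (fun w =>
      w ≠ u ∧ w ≠ v ∧ K.ecolor u w = EColor.gray ∧ K.ecolor v w = EColor.gray), x w := by
  rw [dG, dG, ← Finset.sum_union_inter, ← Finset.filter_and]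
  have hunion : ∑ w ∈ (Finset.univ.filter fun w => w ≠ u ∧ K.ecolor u w = EColor.gray) ∪
      Finset.univ.filter (fun w => w ≠ v ∧ K.ecolor v w = EColor.gray), x w ≤ 1 :=
    hx.2 ▸ Finset.sum_le_sum_of_subset_of_nonneg (Finset.subset_univ _) fun w _ _ => hx.1 w
  refine add_le_add hunion (Finset.sum_le_sum_of_subset_of_nonneg (fun w hw => ?_) fun w _ _ => hx.1 w)
  simp only [Finset.mem_filter, Finset.mem_univ, true_and] at hw ⊢
  tauto

end CRG

theorem one_sub_div_two_lt_or_div_three_le {p a b d₀ d₁ g : ℝ} (hp : p ∈ Set.Ico (1 / 2 : ℝ) 1)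
    (hb : 0 < b) (hba : b ≤ a) (hg₀ : g = p * a + (1 - p) * (1 - a - d₀))
    (hg₁ : g = p * b + (1 - p) * (1 - b - d₁)) (hd₀ : d₀ ≤ 1 - a) (hd : d₀ + d₁ ≤ 1 + b) :
    (1 - p) / 2 < g ∨ p / 3 ≤ g := by
  obtain ⟨hp₁, hp₂⟩ := hp
  have hpb : p * b ≤ g := by
    nlinarith [mul_nonneg (sub_nonneg.2 hp₂.le) (sub_nonneg.2 hd₀)]
  have h2g : (5 * p - 3) * b + (1 - p) ≤ 2 * g := by
    nlinarith [mul_nonneg (sub_nonneg.2 hp₂.le) (by linarith : 0 ≤ 1 + b - d₀ - d₁)]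
  rcases lt_or_ge (3 / 5) p with hp₃ | hp₃
  · left
    nlinarith [mul_pos (by linarith : 0 < 5 * p - 3) hb]
  · right
    nlinarith [mul_le_mul_of_nonpos_left hpb (by linarith : 5 * p - 3 ≤ 0)]

theorem two_common_gray_neighbors_or_g_large_general {V : Type} [Fintype V] [DecidableEq V]
    (p : ℝ) (hp : p ∈ Set.Ico (1 / 2 : ℝ) 1)
    (K : CRG V) (hcore : K.IsPCore p)
    (hwhite : ∀ v : V, K.vWhite v = true)
    (hedges : ∀ u v : V, u ≠ v → K.ecolor u v ≠ EColor.white)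
    (x : V → ℝ) (hx : K.IsOptWeight p x)
    (v₀ : V) (hv₀ : ∀ v : V, x v ≤ x v₀)
    (v₁ : V)
    (hv₁max : ∀ v : V, v ≠ v₀ → K.ecolor v₀ v = EColor.gray → x v ≤ x v₁) :
    2 ≤ (Finset.univ.filter fun w =>
        w ≠ v₀ ∧ w ≠ v₁ ∧ K.ecolor v₀ w = EColor.gray ∧ K.ecolor v₁ w = EColor.gray).card ∨
    (1 - p) / 2 < K.g p ∨ p / 3 ≤ K.g p := by
  refine or_iff_not_imp_left.2 fun hone => ?_
  have hpos := hx.pos_of_isPCore hcore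
  have hg : ∀ v, K.g p = p * x v + (1 - p) * (1 - x v - K.dG x v) := fun v => by
    rw [← K.mulVec_toMatrix_apply_of_white hwhite hedges hx.2.1, hx.mulVec_apply_eq_g (hpos v).ne']
  have hcommon : K.dG x v₀ + K.dG x v₁ ≤ 1 + x v₁ := by
    refine (K.dG_add_dG_le hx.mem_stdSimplex v₀ v₁).trans (add_le_add_right ?_ 1)
    refine Finset.sum_le_of_card_le_one (by omega) (fun w hw => ?_) (hpos v₁).le
    simp only [Finset.mem_filter] at hw
    exact hv₁max w hw.2.1 hw.2.2.2.1
  exact one_sub_div_two_lt_or_div_three_le hp (hpos v₁) (hv₀ v₁) (hg v₀) (hg v₁)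
    (K.dG_le_one_sub hx.mem_stdSimplex v₀) hcommon

theorem two_common_gray_neighbors_or_g_large {V : Type} [Fintype V] [DecidableEq V] [Nonempty V]
    (p : ℝ) (hp : p ∈ Set.Ico (1 / 2 : ℝ) 1)
    (K : CRG V) (hcore : K.IsPCore p)
    (hwhite : ∀ v : V, K.vWhite v = true)
    (hedges : ∀ u v : V, u ≠ v → K.ecolor u v ≠ EColor.white)
    (x : V → ℝ) (hx : K.IsOptWeight p x)
    (v₀ : V) (hv₀ : ∀ v : V, x v ≤ x v₀)
    (v₁ : V) (hv₁ : v₁ ≠ v₀ ∧ K.ecolor v₀ v₁ = EColor.gray)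
    (hv₁max : ∀ v : V, v ≠ v₀ → K.ecolor v₀ v = EColor.gray → x v ≤ x v₁) :
    2 ≤ (Finset.univ.filter fun w =>
        w ≠ v₀ ∧ w ≠ v₁ ∧ K.ecolor v₀ w = EColor.gray ∧ K.ecolor v₁ w = EColor.gray).card ∨
    (1 - p) / 2 < K.g p ∨ p / 3 ≤ K.g p :=
  two_common_gray_neighbors_or_g_large_general p hp K hcore hwhite hedges x hx v₀ hv₀ v₁ hv₁max
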